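/- arXiv:1105.3862 — 2 statements merged into one kernel-verified Lean document; each statement's English description precedes it below -/
import Mathlib

section
/- Let m be even and let T : Ω̂_m → {0,1}^{m/2} be the bijection T(ω_1,…,ω_m) = (f(ω_1,ω_2), f(ω_3,ω_4), …, f(ω_{m−1},ω_m)) where f(1,0) = 1 and f(0,1) = 0. Then for all increasing events A, B ⊆ {0,1}^m, T((A □ B) ∩ Ω̂_m) ⊆ T(A ∩ Ω̂_m) □ T(B ∩ Ω̂_m), where the □ on the right is the disjoint-occurrence operation on {0,1}^{m/2}. -/
open scoped Classical

/-- The cylinder `[ω]_S`: all configurations agreeing with `ω` on `S`. -/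
def cyl {ι : Type*} (ω : ι → Bool) (S : Finset ι) : Set (ι → Bool) :=
  {α | ∀ i ∈ S, α i = ω i}

/-- Disjoint occurrence `A □ B`. -/
def boxOp {ι : Type*} (A B : Set (ι → Bool)) : Set (ι → Bool) :=
  {ω | ∃ K L : Finset ι, Disjoint K L ∧ cyl ω K ⊆ A ∧ cyl ω L ⊆ B}

/-- An increasing event. -/
def IsIncreasing {ι : Type*} (A : Set (ι → Bool)) : Prop :=
  ∀ ⦃ω ω' : ι → Bool⦄, ω ∈ A → (∀ i, ω i ≤ ω' i) → ω' ∈ A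

/-- Number of coordinates equal to 1 (`true`). -/
def ones {ι : Type*} [Fintype ι] (ω : ι → Bool) : ℕ :=
  (Finset.univ.filter fun i => ω i = true).card

/-- The probability of an event `A` under the weight function `μ`. -/
noncomputable def mass {ι : Type*} [Fintype ι] [DecidableEq ι]
    (μ : (ι → Bool) → ℝ) (A : Set (ι → Bool)) : ℝ :=
  ∑ ω : ι → Bool, if ω ∈ A then μ ω else 0

/-- The uniform probability weight on a set `S` of configurations, `0` elsewhere. -/
noncomputable def uniformOn {ι : Type*} (S : Set (ι → Bool)) : (ι → Bool) → ℝ :=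
  fun ω => if ω ∈ S then ((S.ncard : ℝ))⁻¹ else 0

/-- The `k`-out-of-`n` measure: uniform on configurations with exactly `k` ones. -/
noncomputable def kOutOf (n k : ℕ) : (Fin n → Bool) → ℝ :=
  uniformOn {ω : Fin n → Bool | ones ω = k}

/-- Coordinatewise flip `ω̄`. -/
def flipC {ι : Type*} (ω : ι → Bool) : ι → Bool := fun i => !ω i

/-- `Ω̂_m`: configurations whose consecutive pairs `(ω_{2i-1}, ω_{2i})`
(0-based: indices `2j` and `2j+1`) are `(1,0)` or `(0,1)`. -/
def hatOmega (m : ℕ) : Set (Fin m → Bool) :=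
  {ω | ∀ j : ℕ, ∀ h : 2 * j + 1 < m, ω ⟨2 * j, by omega⟩ ≠ ω ⟨2 * j + 1, h⟩}

/-- The encoding bijection `T : Ω̂_m → {0,1}^{m/2}`: on `Ω̂_m`, `f(1,0) = 1` and
`f(0,1) = 0`, i.e. `T ω j` is the first coordinate of the `j`-th pair. -/
def Tmap (m : ℕ) (ω : Fin m → Bool) : Fin (m / 2) → Bool :=
  fun j => ω ⟨2 * j.val, by have := j.isLt; omega⟩

/-
For increasing `A`, a witness `K` of `ω ∈ A` may be shrunk to the coordinates where `ω = 1`.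
On `Ω̂_m` every pair `(ω_{2j}, ω_{2j+1})` carries exactly one `1`, so two disjoint such witnesses
never meet the same pair, and their sets of pairs are disjoint witnesses for `T ω`. The inverse
`T⁻¹ τ = (τ_0, ¬τ_0, τ_1, ¬τ_1, …)` turns a configuration agreeing with `T ω` on the pairs of `K`
into one of `Ω̂_m` agreeing with `ω` on `K`.
-/

theorem IsIncreasing.cyl_filter_subset {ι : Type*} {A : Set (ι → Bool)} (hA : IsIncreasing A)
    {ω : ι → Bool} {K : Finset ι} (hK : cyl ω K ⊆ A) :
    cyl ω (K.filter fun i => ω i = true) ⊆ A := by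
  intro α hα
  have hmem : K.piecewise ω α ∈ cyl ω K := fun i hi => K.piecewise_eq_of_mem _ _ hi
  refine hA (hK hmem) fun i => ?_
  by_cases hi : i ∈ K
  · rw [K.piecewise_eq_of_mem _ _ hi]
    cases hωi : ω i
    · exact Bool.false_le _
    · rw [hα i (Finset.mem_filter.mpr ⟨hi, hωi⟩), hωi]
  · rw [K.piecewise_eq_of_notMem _ _ hi]

section Pairs

variable {m : ℕ} (hm : Even m)

def pairOf (i : Fin m) : Fin (m / 2) :=
  ⟨i / 2, by obtain ⟨k, rfl⟩ := hm; omega⟩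

def Tlift (τ : Fin (m / 2) → Bool) : Fin m → Bool :=
  fun i => if i.val % 2 = 0 then τ (pairOf hm i) else !τ (pairOf hm i)

variable {hm}

theorem Tmap_Tlift (τ : Fin (m / 2) → Bool) : Tmap m (Tlift hm τ) = τ := by
  funext j
  simp only [Tmap, Tlift, pairOf, Nat.mul_mod_right, if_true]
  congr 1
  ext
  simp

theorem Tlift_mem_hatOmega (τ : Fin (m / 2) → Bool) : Tlift hm τ ∈ hatOmega m := by
  intro j hj
  have hpair : pairOf hm ⟨2 * j, by omega⟩ = pairOf hm ⟨2 * j + 1, hj⟩ := by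
    ext; simp only [pairOf]; omega
  simp [Tlift, hpair, Nat.add_mod]

theorem Tlift_Tmap {ω : Fin m → Bool} (hω : ω ∈ hatOmega m) : Tlift hm (Tmap m ω) = ω := by
  funext i
  obtain ⟨j, hj | hj⟩ : ∃ j, i.val = 2 * j ∨ i.val = 2 * j + 1 := ⟨i / 2, by omega⟩
  · have hi : (⟨2 * (i.val / 2), by omega⟩ : Fin m) = i := by ext; simp only; omega
    simp only [Tlift, Tmap, pairOf, hi, show i.val % 2 = 0 by omega, if_true]
  · have hi : (⟨2 * j + 1, by omega⟩ : Fin m) = i := Fin.ext hj.symm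
    have hi' : (⟨2 * (i.val / 2), by omega⟩ : Fin m) = ⟨2 * j, by omega⟩ := by
      ext; simp only; omega
    have hne := hω j (by omega)
    rw [hi] at hne
    simp only [Tlift, Tmap, pairOf, hi', show i.val % 2 = 1 by omega]
    cases h : ω i <;> simp_all

theorem eq_of_pairOf_eq {ω : Fin m → Bool} (hω : ω ∈ hatOmega m) {i i' : Fin m}
    (hpair : pairOf hm i = pairOf hm i') (hval : ω i = ω i') : i = i' := by
  rw [← Tlift_Tmap (hm := hm) hω] at hval
  simp only [Tlift, hpair] at hval
  have hdiv : i.val / 2 = i'.val / 2 := congrArg Fin.val hpair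
  ext
  split_ifs at hval with h h' h' <;> simp at hval <;> omega

theorem cyl_image_pairOf_subset {A : Set (Fin m → Bool)} {ω : Fin m → Bool}
    (hω : ω ∈ hatOmega m) {K : Finset (Fin m)} (hK : cyl ω K ⊆ A) :
    cyl (Tmap m ω) (K.image (pairOf hm)) ⊆ Tmap m '' (A ∩ hatOmega m) := by
  intro τ hτ
  refine ⟨Tlift hm τ, ⟨hK fun i hi => ?_, Tlift_mem_hatOmega τ⟩, Tmap_Tlift τ⟩
  conv_rhs => rw [← Tlift_Tmap (hm := hm) hω]
  simp only [Tlift, hτ _ (Finset.mem_image_of_mem _ hi)]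

theorem disjoint_image_pairOf {ω : Fin m → Bool} (hω : ω ∈ hatOmega m)
    {K L : Finset (Fin m)} (hKL : Disjoint K L)
    (hK : ∀ i ∈ K, ω i = true) (hL : ∀ i ∈ L, ω i = true) :
    Disjoint (K.image (pairOf hm)) (L.image (pairOf hm)) := by
  simp only [Finset.disjoint_left, Finset.mem_image]
  rintro _ ⟨i, hiK, rfl⟩ ⟨i', hi'L, hpair⟩
  have hii' : i' = i := eq_of_pairOf_eq hω hpair (by rw [hK i hiK, hL i' hi'L])
  exact Finset.disjoint_left.mp hKL hiK (hii' ▸ hi'L)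

end Pairs

/-- `T((A □ B) ∩ Ω̂_m) ⊆ T(A ∩ Ω̂_m) □ T(B ∩ Ω̂_m)` for increasing `A, B`. -/
theorem Tmap_box_subset (m : ℕ) (hm : Even m)
    (A B : Set (Fin m → Bool)) (hA : IsIncreasing A) (hB : IsIncreasing B) :
    Tmap m '' ((boxOp A B) ∩ hatOmega m) ⊆
      boxOp (Tmap m '' (A ∩ hatOmega m)) (Tmap m '' (B ∩ hatOmega m)) := by
  rintro _ ⟨ω, ⟨⟨K, L, hKL, hKA, hLB⟩, hω⟩, rfl⟩
  have hones : ∀ S : Finset (Fin m), ∀ i ∈ S.filter (ω · = true), ω i = true :=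
    fun _ _ hi => (Finset.mem_filter.mp hi).2
  exact ⟨_, _, disjoint_image_pairOf (hm := hm) hω (Finset.disjoint_filter_filter hKL)
      (hones K) (hones L),
    cyl_image_pairOf_subset hω (hA.cyl_filter_subset hKA),
    cyl_image_pairOf_subset hω (hB.cyl_filter_subset hLB)⟩
end

section
/- The BK property is preserved under projections: if μ is a probability measure on {0,1}^{n+m} such that μ(A □ B) ≤ μ(A)μ(B) for all increasing events A, B ⊆ {0,1}^{n+m}, then its marginal ν on {0,1}^n (the pushforward of μ under the projection onto the first n coordinates) satisfies ν(A' □ B') ≤ ν(A')ν(B') for all increasing events A', B' ⊆ {0,1}^n. -/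
open scoped Classical

/-- The marginal on the first `n` coordinates of a weight function on `{0,1}^{n+m}`. -/
noncomputable def marginal (n m : ℕ) (μ : (Fin (n + m) → Bool) → ℝ) :
    (Fin n → Bool) → ℝ :=
  fun x => mass μ {ω | ∀ i : Fin n, ω (Fin.castAdd m i) = x i}

/-
Restricting configurations to the first `n` coordinates turns the marginal `ν` into the
pushforward of `μ`, so `ν(E) = μ(π⁻¹ E)` for the projection `π`. Pulling back along `π` keeps
events increasing, and a witness pair of disjoint index sets for `π ω ∈ A' □ B'` embeds into the
big index set, so `π⁻¹(A' □ B') ⊆ π⁻¹A' □ π⁻¹B'`. Monotonicity of `μ` and the BK inequality for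
`μ` then finish.
-/

section Mass

variable {ι κ : Type*} [Fintype ι] [DecidableEq ι] [Fintype κ] [DecidableEq κ]

theorem mass_mono {μ : (ι → Bool) → ℝ} (hμ : ∀ ω, 0 ≤ μ ω) {S T : Set (ι → Bool)}
    (hST : S ⊆ T) : mass μ S ≤ mass μ T :=
  Finset.sum_le_sum fun ω _ => by
    by_cases hS : ω ∈ S
    · simp [hS, hST hS]
    · simp only [hS, if_false]
      split_ifs
      exacts [hμ ω, le_rfl]

noncomputable def pushforward (π : (ι → Bool) → (κ → Bool)) (μ : (ι → Bool) → ℝ) :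
    (κ → Bool) → ℝ :=
  fun x => mass μ {ω | π ω = x}

theorem mass_pushforward (π : (ι → Bool) → (κ → Bool)) (μ : (ι → Bool) → ℝ)
    (S : Set (κ → Bool)) : mass (pushforward π μ) S = mass μ (π ⁻¹' S) := by
  simp only [mass, pushforward, Set.mem_preimage, Set.mem_ofPred_eq]
  rw [← Finset.sum_filter, Finset.sum_comm]
  refine Finset.sum_congr rfl fun ω _ => ?_
  convert Finset.sum_ite_eq _ (π ω) fun _ => μ ω
  simp

end Mass

section Restriction

variable {ι κ : Type*}

theorem IsIncreasing.preimage_comp {A : Set (κ → Bool)} (hA : IsIncreasing A) (e : κ → ι) :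
    IsIncreasing ((· ∘ e) ⁻¹' A : Set (ι → Bool)) :=
  fun _ _ hω hle => hA hω fun i => hle (e i)

theorem preimage_comp_boxOp_subset (e : κ ↪ ι) (A B : Set (κ → Bool)) :
    (· ∘ e) ⁻¹' boxOp A B ⊆ boxOp ((· ∘ e) ⁻¹' A) ((· ∘ e) ⁻¹' B) := by
  rintro ω ⟨K, L, hKL, hK, hL⟩
  have cyl_map : ∀ S : Finset κ, ∀ α ∈ cyl ω (S.map e), α ∘ e ∈ cyl (ω ∘ e) S :=
    fun S α hα i hi => hα (e i) (Finset.mem_map_of_mem e hi)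
  exact ⟨K.map e, L.map e, Finset.disjoint_map e |>.mpr hKL,
    fun α hα => hK (cyl_map K α hα), fun α hα => hL (cyl_map L α hα)⟩

end Restriction

theorem marginal_eq_pushforward (n m : ℕ) (μ : (Fin (n + m) → Bool) → ℝ) :
    marginal n m μ = pushforward (· ∘ Fin.castAdd m) μ := by
  ext x
  simp only [marginal, pushforward, funext_iff, Function.comp_apply]

theorem bk_preserved_under_projection_general (n m : ℕ) (μ : (Fin (n + m) → Bool) → ℝ)
    (hpos : ∀ ω, 0 ≤ μ ω)
    (hBK : ∀ A B : Set (Fin (n + m) → Bool), IsIncreasing A → IsIncreasing B →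
      mass μ (boxOp A B) ≤ mass μ A * mass μ B)
    (A' B' : Set (Fin n → Bool)) (hA' : IsIncreasing A') (hB' : IsIncreasing B') :
    mass (marginal n m μ) (boxOp A' B') ≤
      mass (marginal n m μ) A' * mass (marginal n m μ) B' := by
  let e : Fin n ↪ Fin (n + m) := Fin.castAddEmb m
  simp only [marginal_eq_pushforward, mass_pushforward]
  calc mass μ ((· ∘ e) ⁻¹' boxOp A' B')
      ≤ mass μ (boxOp ((· ∘ e) ⁻¹' A') ((· ∘ e) ⁻¹' B')) :=
        mass_mono hpos (preimage_comp_boxOp_subset e A' B')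
    _ ≤ mass μ ((· ∘ e) ⁻¹' A') * mass μ ((· ∘ e) ⁻¹' B') :=
        hBK _ _ (hA'.preimage_comp e) (hB'.preimage_comp e)

/-- The BK property is preserved under projection onto the first `n` coordinates. -/
theorem bk_preserved_under_projection (n m : ℕ) (μ : (Fin (n + m) → Bool) → ℝ)
    (hpos : ∀ ω, 0 ≤ μ ω) (hsum : (∑ ω : Fin (n + m) → Bool, μ ω) = 1)
    (hBK : ∀ A B : Set (Fin (n + m) → Bool), IsIncreasing A → IsIncreasing B →
      mass μ (boxOp A B) ≤ mass μ A * mass μ B)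
    (A' B' : Set (Fin n → Bool)) (hA' : IsIncreasing A') (hB' : IsIncreasing B') :
    mass (marginal n m μ) (boxOp A' B') ≤
      mass (marginal n m μ) A' * mass (marginal n m μ) B' :=
  bk_preserved_under_projection_general n m μ hpos hBK A' B' hA' hB'
end
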